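/- arXiv:1601.04355 — 3 statements merged into one kernel-verified Lean document; each statement's English description precedes it below -/
import Mathlib

section
/- Let ρ_ss be a full-rank stationary state of an ergodic Lindblad generator W (so W^{-1} exists on the traceless-w.r.t.-ρ_ss subspace B₀). Define C(X) = X - tr[ρ_ss X]·𝟙 and, for X = (X⁰, X¹, ..., X^k) ∈ M_d(ℂ)^{k+1}, define R(X) = (C(X⁰), X¹, ..., X^k) - L(W^{-1}(C(X⁰))), where L(K) = (W(K), i[L¹,K], ..., i[L^k,K]). Then R is a projection: R² = R. -/
open Matrix
open scoped ComplexOrder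

/- The first component of `R X` is `C X⁰ - W (W⁻¹ (C X⁰)) = 0`, because `C` maps into `B₀`
when `tr ρ = 1`. So `R (R X)` applies `R` to an argument with zeroth component `0`, on which
`C`, `W⁻¹` and hence `L ∘ W⁻¹ ∘ C` vanish: `R` leaves it unchanged. -/

theorem Matrix.trace_mul_sub_trace_mul_smul_one {n R : Type*} [Fintype n] [DecidableEq n]
    [CommRing R] {ρ : Matrix n n R} (htr : ρ.trace = 1) (X : Matrix n n R) :
    (ρ * (X - (ρ * X).trace • (1 : Matrix n n R))).trace = 0 := by
  rw [mul_sub, Matrix.mul_smul, mul_one, trace_sub, trace_smul, htr, smul_eq_mul, mul_one,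
    sub_self]

theorem stmt3_general {d k : ℕ}
    (ρ : Matrix (Fin d) (Fin d) ℂ) (htr : ρ.trace = 1)
    (L : Fin k → Matrix (Fin d) (Fin d) ℂ)
    (W : Matrix (Fin d) (Fin d) ℂ →ₗ[ℂ] Matrix (Fin d) (Fin d) ℂ)
    (Winv : Matrix (Fin d) (Fin d) ℂ →ₗ[ℂ] Matrix (Fin d) (Fin d) ℂ)
    (hWinv : ∀ X, (ρ * X).trace = 0 → W (Winv X) = X) :
    let C : Matrix (Fin d) (Fin d) ℂ → Matrix (Fin d) (Fin d) ℂ :=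
      fun X => X - (ρ * X).trace • (1 : Matrix (Fin d) (Fin d) ℂ)
    let R : Matrix (Fin d) (Fin d) ℂ × (Fin k → Matrix (Fin d) (Fin d) ℂ) →
        Matrix (Fin d) (Fin d) ℂ × (Fin k → Matrix (Fin d) (Fin d) ℂ) :=
      fun X => (C X.1 - W (Winv (C X.1)),
        fun i => X.2 i - Complex.I • (L i * Winv (C X.1) - Winv (C X.1) * L i))
    ∀ X, R (R X) = R X := by
  intro C R X
  have hRX_fst : (R X).1 = 0 :=
    sub_eq_zero.mpr (hWinv _ (trace_mul_sub_trace_mul_smul_one htr X.1)).symm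
  have hC_zero : C 0 = 0 := by simp [C]
  simp only [R] at hRX_fst ⊢
  rw [hRX_fst, hC_zero, map_zero, map_zero]
  simp

/-- With `C(X) = X - tr[ρX]𝟙`, `L(K) = (W(K), i[L¹,K],…,i[Lᵏ,K])` and
`R(X) = (C(X⁰), X¹,…,Xᵏ) - L(W⁻¹(C(X⁰)))`, the map `R` is a projection: `R² = R`. -/
theorem stmt3 {d k : ℕ}
    (ρ : Matrix (Fin d) (Fin d) ℂ) (hρ : ρ.PosDef) (htr : ρ.trace = 1)
    (L : Fin k → Matrix (Fin d) (Fin d) ℂ)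
    (W : Matrix (Fin d) (Fin d) ℂ →ₗ[ℂ] Matrix (Fin d) (Fin d) ℂ)
    (Winv : Matrix (Fin d) (Fin d) ℂ →ₗ[ℂ] Matrix (Fin d) (Fin d) ℂ)
    (hW0 : ∀ X, (ρ * W X).trace = 0)
    (hWinv : ∀ X, (ρ * X).trace = 0 → W (Winv X) = X) :
    let C : Matrix (Fin d) (Fin d) ℂ → Matrix (Fin d) (Fin d) ℂ :=
      fun X => X - (ρ * X).trace • (1 : Matrix (Fin d) (Fin d) ℂ)
    let R : Matrix (Fin d) (Fin d) ℂ × (Fin k → Matrix (Fin d) (Fin d) ℂ) →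
        Matrix (Fin d) (Fin d) ℂ × (Fin k → Matrix (Fin d) (Fin d) ℂ) :=
      fun X => (C X.1 - W (Winv (C X.1)),
        fun i => X.2 i - Complex.I • (L i * Winv (C X.1) - Winv (C X.1) * L i))
    ∀ X, R (R X) = R X :=
  stmt3_general ρ htr L W Winv hWinv
end

section
/- With R defined as above (R(X) = (C(X⁰), X¹,...,X^k) - L(W^{-1}(C(X⁰)))), the kernel of R equals {(W(K) + r𝟙, i[L¹,K], ..., i[L^k,K]) : K ∈ M_d(ℂ), r ∈ ℂ} and the range of R equals {(0, Y¹, ..., Y^k) : Y^i ∈ M_d(ℂ)}. -/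
open Matrix
open scoped ComplexOrder

/-!
Since `φ ∘ W = 0` and `φ 1 = 1`, the map `C = id - φ(·) 1` projects onto `ker φ`, on which `W ∘ Winv`
is the identity. Hence `R X = (0, X₂ - δ (Winv (C X₁)))` with `δ K = (i[Lⁱ, K])ᵢ`, which gives the
range at once. For the kernel, `X₁ = W (Winv (C X₁)) + φ(X₁) 1`; conversely `Winv (W K)` differs
from `K` by an element of `ker W = ℂ 1`, on which `δ` vanishes.
-/

section Projection

variable {A ι : Type*} [Ring A] [Algebra ℂ A]

def commutatorMap (L : ι → A) (K : A) : ι → A :=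
  fun i => Complex.I • (L i * K - K * L i)

@[simp]
theorem commutatorMap_zero (L : ι → A) : commutatorMap L 0 = 0 := by
  ext i
  simp [commutatorMap]

theorem commutatorMap_add_smul_one (L : ι → A) (K : A) (c : ℂ) :
    commutatorMap L (K + c • 1) = commutatorMap L K := by
  ext i
  simp [commutatorMap, mul_add, add_mul]

def centered (φ : A →ₗ[ℂ] ℂ) (X : A) : A := X - φ X • 1

theorem apply_centered {φ : A →ₗ[ℂ] ℂ} (hφ : φ 1 = 1) (X : A) : φ (centered φ X) = 0 := by
  simp [centered, hφ]

theorem centered_add_smul_one {φ : A →ₗ[ℂ] ℂ} (hφ : φ 1 = 1) {X : A} (hX : φ X = 0) (r : ℂ) :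
    centered φ (X + r • 1) = X := by
  simp [centered, hX, hφ]

theorem add_centered (φ : A →ₗ[ℂ] ℂ) (X : A) : centered φ X + φ X • 1 = X :=
  sub_add_cancel X _

/-- The map `R` of the statement, for a unital functional `φ` (there `φ X = tr[ρ X]`). -/
def projR (φ : A →ₗ[ℂ] ℂ) (W Winv : A →ₗ[ℂ] A) (L : ι → A) (X : A × (ι → A)) : A × (ι → A) :=
  (centered φ X.1 - W (Winv (centered φ X.1)), X.2 - commutatorMap L (Winv (centered φ X.1)))

variable {φ : A →ₗ[ℂ] ℂ} {W Winv : A →ₗ[ℂ] A} (L : ι → A)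

theorem projR_eq (hφ : φ 1 = 1) (hWinv : ∀ X, φ X = 0 → W (Winv X) = X) (X : A × (ι → A)) :
    projR φ W Winv L X = (0, X.2 - commutatorMap L (Winv (centered φ X.1))) := by
  rw [projR, hWinv _ (apply_centered hφ X.1), sub_self]

theorem commutatorMap_Winv_W (hW0 : ∀ X, φ (W X) = 0) (hWinv : ∀ X, φ X = 0 → W (Winv X) = X)
    (hker : ∀ X, W X = 0 → ∃ c : ℂ, X = c • 1) (K : A) :
    commutatorMap L (Winv (W K)) = commutatorMap L K := by
  obtain ⟨c, hc⟩ := hker (Winv (W K) - K) (by rw [map_sub, hWinv _ (hW0 K), sub_self])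
  rw [← commutatorMap_add_smul_one L K c, ← hc, add_sub_cancel]

theorem projR_eq_zero_iff (hφ : φ 1 = 1) (hW0 : ∀ X, φ (W X) = 0)
    (hWinv : ∀ X, φ X = 0 → W (Winv X) = X) (hker : ∀ X, W X = 0 → ∃ c : ℂ, X = c • 1)
    (X : A × (ι → A)) :
    projR φ W Winv L X = 0 ↔ ∃ (K : A) (r : ℂ), X = (W K + r • 1, commutatorMap L K) := by
  rw [projR_eq L hφ hWinv, Prod.mk_eq_zero, sub_eq_zero]
  constructor
  · rintro ⟨-, hX₂⟩
    refine ⟨Winv (centered φ X.1), φ X.1, Prod.ext ?_ hX₂⟩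
    rw [hWinv _ (apply_centered hφ X.1), add_centered]
  · rintro ⟨K, r, rfl⟩
    refine ⟨rfl, ?_⟩
    rw [centered_add_smul_one hφ (hW0 K), commutatorMap_Winv_W L hW0 hWinv hker]

theorem exists_projR_eq_iff (hφ : φ 1 = 1) (hWinv : ∀ X, φ X = 0 → W (Winv X) = X)
    (Y : A × (ι → A)) : (∃ X, projR φ W Winv L X = Y) ↔ Y.1 = 0 := by
  simp only [projR_eq L hφ hWinv]
  constructor
  · rintro ⟨X, rfl⟩
    rfl
  · intro hY
    refine ⟨(0, Y.2), Prod.ext hY.symm ?_⟩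
    simp [centered]

end Projection

theorem stmt4_general {d k : ℕ}
    (ρ : Matrix (Fin d) (Fin d) ℂ) (htr : ρ.trace = 1)
    (L : Fin k → Matrix (Fin d) (Fin d) ℂ)
    (W : Matrix (Fin d) (Fin d) ℂ →ₗ[ℂ] Matrix (Fin d) (Fin d) ℂ)
    (Winv : Matrix (Fin d) (Fin d) ℂ →ₗ[ℂ] Matrix (Fin d) (Fin d) ℂ)
    (hW0 : ∀ X, (ρ * W X).trace = 0)
    (hWinv : ∀ X, (ρ * X).trace = 0 → W (Winv X) = X)
    (hker : ∀ X, W X = 0 ↔ ∃ c : ℂ, X = c • (1 : Matrix (Fin d) (Fin d) ℂ)) :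
    let C : Matrix (Fin d) (Fin d) ℂ → Matrix (Fin d) (Fin d) ℂ :=
      fun X => X - (ρ * X).trace • (1 : Matrix (Fin d) (Fin d) ℂ)
    let R : Matrix (Fin d) (Fin d) ℂ × (Fin k → Matrix (Fin d) (Fin d) ℂ) →
        Matrix (Fin d) (Fin d) ℂ × (Fin k → Matrix (Fin d) (Fin d) ℂ) :=
      fun X => (C X.1 - W (Winv (C X.1)),
        fun i => X.2 i - Complex.I • (L i * Winv (C X.1) - Winv (C X.1) * L i))
    (∀ X, R X = 0 ↔ ∃ (K : Matrix (Fin d) (Fin d) ℂ) (r : ℂ),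
        X = (W K + r • (1 : Matrix (Fin d) (Fin d) ℂ),
          fun i => Complex.I • (L i * K - K * L i))) ∧
    (∀ Y : Matrix (Fin d) (Fin d) ℂ × (Fin k → Matrix (Fin d) (Fin d) ℂ),
        (∃ X, R X = Y) ↔ Y.1 = 0) := by
  intro C R
  let φ := Matrix.traceLinearMap (Fin d) ℂ ℂ ∘ₗ LinearMap.mulLeft ℂ ρ
  have hφ : φ 1 = 1 := by simpa [φ] using htr
  have hR : R = projR φ W Winv L := rfl
  rw [hR]
  exact ⟨projR_eq_zero_iff L hφ hW0 hWinv (fun X => (hker X).mp),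
    exists_projR_eq_iff L hφ hWinv⟩

/-- kernel and range of the projection `R`:
`ker R = {(W(K)+r𝟙, i[L¹,K],…,i[Lᵏ,K]) : K, r}` and `ran R = {(0,Y¹,…,Yᵏ)}`. -/
theorem stmt4 {d k : ℕ}
    (ρ : Matrix (Fin d) (Fin d) ℂ) (hρ : ρ.PosDef) (htr : ρ.trace = 1)
    (L : Fin k → Matrix (Fin d) (Fin d) ℂ)
    (W : Matrix (Fin d) (Fin d) ℂ →ₗ[ℂ] Matrix (Fin d) (Fin d) ℂ)
    (Winv : Matrix (Fin d) (Fin d) ℂ →ₗ[ℂ] Matrix (Fin d) (Fin d) ℂ)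
    (hW0 : ∀ X, (ρ * W X).trace = 0)
    (hWinv : ∀ X, (ρ * X).trace = 0 → W (Winv X) = X)
    (hker : ∀ X, W X = 0 ↔ ∃ c : ℂ, X = c • (1 : Matrix (Fin d) (Fin d) ℂ)) :
    let C : Matrix (Fin d) (Fin d) ℂ → Matrix (Fin d) (Fin d) ℂ :=
      fun X => X - (ρ * X).trace • (1 : Matrix (Fin d) (Fin d) ℂ)
    let R : Matrix (Fin d) (Fin d) ℂ × (Fin k → Matrix (Fin d) (Fin d) ℂ) →
        Matrix (Fin d) (Fin d) ℂ × (Fin k → Matrix (Fin d) (Fin d) ℂ) :=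
      fun X => (C X.1 - W (Winv (C X.1)),
        fun i => X.2 i - Complex.I • (L i * Winv (C X.1) - Winv (C X.1) * L i))
    (∀ X, R X = 0 ↔ ∃ (K : Matrix (Fin d) (Fin d) ℂ) (r : ℂ),
        X = (W K + r • (1 : Matrix (Fin d) (Fin d) ℂ),
          fun i => Complex.I • (L i * K - K * L i))) ∧
    (∀ Y : Matrix (Fin d) (Fin d) ℂ × (Fin k → Matrix (Fin d) (Fin d) ℂ),
        (∃ X, R X = Y) ↔ Y.1 = 0) :=
  stmt4_general ρ htr L W Winv hW0 hWinv hker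
end

section
/- Define E_D : M_d(ℂ)_{sa} × M_d(ℂ)^k → M_d(ℂ)_{sa} by E_D(Ḣ, L̇¹, ..., L̇^k) = Ḣ + Im Σ_{i=1}^k L̇^{i*} L^i, where Im A := (A - A*)/(2i). Let D_*(X) for X = (-iK, r) ∈ 𝔤 (K self-adjoint, r ∈ ℝ) be the tangent vector D_*(X) = (i[H,K] + r𝟙, i[L¹,K], ..., i[L^k,K]). Then E_D(D_*(X)) = r𝟙 + W_D(K), where W_D is the Lindblad generator W_D(K) = i[H,K] + Σ_i (L^{i*} K L^i - (1/2)(L^{i*}L^i K + K L^{i*}L^i)). -/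
open Matrix

/-- Matrix "imaginary part" `Im A = (A - A*)/(2i)`. -/
noncomputable def mIm {d : ℕ} (A : Matrix (Fin d) (Fin d) ℂ) : Matrix (Fin d) (Fin d) ℂ :=
  ((2 : ℂ) * Complex.I)⁻¹ • (A - Aᴴ)

/-- The Lindblad generator associated to `(H, L¹, …, Lᵏ)`. -/
noncomputable def lindblad {d k : ℕ} (H : Matrix (Fin d) (Fin d) ℂ)
    (L : Fin k → Matrix (Fin d) (Fin d) ℂ) (X : Matrix (Fin d) (Fin d) ℂ) :
    Matrix (Fin d) (Fin d) ℂ :=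
  Complex.I • (H * X - X * H) +
    ∑ i, ((L i)ᴴ * X * L i -
      (2 : ℂ)⁻¹ • ((L i)ᴴ * L i * X + X * ((L i)ᴴ * L i)))

theorem mIm_sum {d : ℕ} {ι : Type*} (s : Finset ι) (A : ι → Matrix (Fin d) (Fin d) ℂ) :
    mIm (∑ i ∈ s, A i) = ∑ i ∈ s, mIm (A i) := by
  simp only [mIm, conjTranspose_sum, ← Finset.sum_sub_distrib, Finset.smul_sum]

theorem mIm_conjTranspose_smul_I_commutator_mul {d : ℕ} {K : Matrix (Fin d) (Fin d) ℂ}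
    (hK : Kᴴ = K) (L : Matrix (Fin d) (Fin d) ℂ) :
    mIm ((Complex.I • (L * K - K * L))ᴴ * L) =
      Lᴴ * K * L - (2 : ℂ)⁻¹ • (Lᴴ * L * K + K * (Lᴴ * L)) := by
  simp only [mIm, conjTranspose_smul, conjTranspose_sub, conjTranspose_mul,
    conjTranspose_conjTranspose, hK, Complex.star_def, Complex.conj_I, map_neg, neg_neg,
    sub_mul, smul_sub, smul_smul, Matrix.smul_mul, Matrix.mul_assoc]
  match_scalars <;> field_simp; norm_num

theorem stmt8_general {d k : ℕ}
    (H K : Matrix (Fin d) (Fin d) ℂ) (hK : Kᴴ = K)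
    (L : Fin k → Matrix (Fin d) (Fin d) ℂ) (r : ℝ) :
    (Complex.I • (H * K - K * H) + (r : ℂ) • (1 : Matrix (Fin d) (Fin d) ℂ)) +
      mIm (∑ i, (Complex.I • (L i * K - K * L i))ᴴ * L i) =
    (r : ℂ) • (1 : Matrix (Fin d) (Fin d) ℂ) + lindblad H L K := by
  simp only [mIm_sum, mIm_conjTranspose_smul_I_commutator_mul hK, lindblad]
  abel

/-- With `E_D(Ḣ,L̇¹,…,L̇ᵏ) = Ḣ + Im Σ L̇ⁱ* Lⁱ` and
`D_*((-iK,r)) = (i[H,K] + r𝟙, i[L¹,K],…,i[Lᵏ,K])`, one has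
`E_D(D_*((-iK,r))) = r𝟙 + W_D(K)`. -/
theorem stmt8 {d k : ℕ}
    (H K : Matrix (Fin d) (Fin d) ℂ) (hH : Hᴴ = H) (hK : Kᴴ = K)
    (L : Fin k → Matrix (Fin d) (Fin d) ℂ) (r : ℝ) :
    (Complex.I • (H * K - K * H) + (r : ℂ) • (1 : Matrix (Fin d) (Fin d) ℂ)) +
      mIm (∑ i, (Complex.I • (L i * K - K * L i))ᴴ * L i) =
    (r : ℂ) • (1 : Matrix (Fin d) (Fin d) ℂ) + lindblad H L K :=
  stmt8_general H K hK L r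
end
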